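/- Fix a ≥ 0. For every continuously differentiable h : ℝ → ℝ with h(0) = 0 and h'(1) = 0, one has ∫₀¹ (h'(t)² − a·h(t) + a·sin(h(t))) dt ≥ ((π/2)² − a/π) · ∫₀¹ h(t)² dt. -/

import Mathlib

/-!
Two ingredients. Pointwise, `x - sin x ≤ x ^ 2 / π` for every real `x`, so for `a ≥ 0` the
integrand is at least `h' ^ 2 - (a / π) h ^ 2`. The remaining inequality
`(π / 2) ^ 2 ∫ h ^ 2 ≤ ∫ h' ^ 2` for `h 0 = 0` is Wirtinger's inequality, proved by Picone's
trick: `c t = (π / 2) cot (π t / 2)` solves the Riccati equation `c' = -((π / 2) ^ 2 + c ^ 2)`,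
which makes `h' ^ 2 - (π / 2) ^ 2 h ^ 2 - (c h ^ 2)'` the square `(h' - c h) ^ 2`. Since `c`
blows up at `0`, integrate over `[ε, 1]`: the boundary term vanishes at `1` because
`cot (π / 2) = 0`, and is `O(ε)` at `ε` because `h ε = O(ε)` and `c ε ≤ 1 / ε`.
-/

open Real intervalIntegral Set Filter Topology

lemma mul_pi_sub_le_pi_mul_sin_of_nonneg_of_le_pi_div_two {x : ℝ} (h0 : 0 ≤ x) (hx : x ≤ π / 2) :
    x * (π - x) ≤ π * sin x := by
  have hpi : 3.14 < π := pi_gt_d2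
  have hpi' : π < 3.15 := pi_lt_d2
  -- the cubic Taylor bound covers `x ≤ 6 / π`, Jordan's inequality covers `x ≥ π - 2`
  rcases le_or_gt (x * π) 6 with hx6 | hx6
  · nlinarith [sin_ge_sub_cube h0, mul_nonneg h0 h0]
  · have := mul_le_sin h0 hx
    rw [div_mul_eq_mul_div, div_le_iff₀ pi_pos] at this
    nlinarith

lemma sub_sq_div_pi_le_sin (x : ℝ) : x - x ^ 2 / π ≤ sin x := by
  rw [sub_div' pi_pos.ne', div_le_iff₀ pi_pos]
  have hpi := pi_pos
  rcases le_or_gt x 0 with hx | hx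
  · nlinarith [le_sin hx]
  rcases le_or_gt x (π / 2) with hx' | hx'
  · nlinarith [mul_pi_sub_le_pi_mul_sin_of_nonneg_of_le_pi_div_two hx.le hx']
  rcases le_or_gt x π with hx'' | hx''
  · have := mul_pi_sub_le_pi_mul_sin_of_nonneg_of_le_pi_div_two (x := π - x) (by linarith)
      (by linarith)
    rw [sin_pi_sub] at this
    nlinarith
  · have := sin_le (x := x - π) (by linarith)
    rw [sin_sub_pi] at this
    nlinarith

lemma hasDerivAt_cot {x : ℝ} (hx : sin x ≠ 0) : HasDerivAt cot (-(1 + cot x ^ 2)) x := by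
  have h := (hasDerivAt_cos x).fun_div (hasDerivAt_sin x) hx
  simp only [← cot_eq_cos_div_sin] at h
  refine h.congr_deriv ?_
  rw [cot_eq_cos_div_sin]
  field_simp
  ring

lemma hasDerivAt_const_mul_cot_const_mul {k t : ℝ} (ht : sin (k * t) ≠ 0) :
    HasDerivAt (fun s => k * cot (k * s)) (-(k ^ 2 + (k * cot (k * t)) ^ 2)) t := by
  have := ((hasDerivAt_cot ht).comp t ((hasDerivAt_id t).const_mul k)).const_mul k
  refine this.congr_deriv ?_
  ring

lemma sub_le_integral_deriv_sq_sub_sq_of_riccati {h h' c : ℝ → ℝ} {k a b : ℝ} (hab : a ≤ b)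
    (hh : ∀ t ∈ Icc a b, HasDerivAt h (h' t) t) (hh' : ContinuousOn h' (Icc a b))
    (hc : ∀ t ∈ Icc a b, HasDerivAt c (-(k ^ 2 + c t ^ 2)) t) :
    c b * h b ^ 2 - c a * h a ^ 2 ≤ ∫ t in a..b, (h' t ^ 2 - k ^ 2 * h t ^ 2) := by
  set F' : ℝ → ℝ := fun t => -(k ^ 2 + c t ^ 2) * h t ^ 2 + c t * (2 * h t * h' t)
  have hF : ∀ t ∈ uIcc a b, HasDerivAt (fun t => c t * h t ^ 2) (F' t) t := by
    intro t ht
    rw [uIcc_of_le hab] at ht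
    exact ((hc t ht).fun_mul ((hh t ht).fun_pow 2)).congr_deriv (by norm_num [F'])
  have hh_cont : ContinuousOn h (Icc a b) := fun t ht => (hh t ht).continuousAt.continuousWithinAt
  have hc_cont : ContinuousOn c (Icc a b) := fun t ht => (hc t ht).continuousAt.continuousWithinAt
  have hF'_int : IntervalIntegrable F' MeasureTheory.volume a b := by
    apply ContinuousOn.intervalIntegrable
    rw [uIcc_of_le hab]
    fun_prop
  rw [← integral_eq_sub_of_hasDerivAt hF hF'_int]
  refine integral_mono_on hab hF'_int ?_ fun t _ => ?_
  · apply ContinuousOn.intervalIntegrable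
    rw [uIcc_of_le hab]
    fun_prop
  -- Picone: the difference of the integrands is the square `(h' - c h) ^ 2`
  nlinarith [sq_nonneg (h' t - c t * h t)]

lemma cot_nonneg_of_nonneg_of_le_pi_div_two {x : ℝ} (h0 : 0 ≤ x) (hx : x ≤ π / 2) :
    0 ≤ cot x := by
  rw [cot_eq_cos_div_sin]
  exact div_nonneg (cos_nonneg_of_mem_Icc ⟨by linarith [pi_pos], hx⟩)
    (sin_nonneg_of_nonneg_of_le_pi h0 (by linarith [pi_pos]))

lemma mul_cot_le_one {x : ℝ} (h0 : 0 < x) (hx : x ≤ π / 2) : x * cot x ≤ 1 := by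
  rw [cot_eq_cos_div_sin, mul_div_assoc',
    div_le_one (sin_pos_of_pos_of_lt_pi h0 (by linarith [pi_pos]))]
  rcases hx.lt_or_eq with hx | rfl
  · have hcos : 0 < cos x := cos_pos_of_mem_Ioo ⟨by linarith [pi_pos], hx⟩
    have := le_tan h0.le hx
    rwa [tan_eq_sin_div_cos, le_div_iff₀ hcos] at this
  · simp

lemma abs_le_mul_of_abs_deriv_le {h : ℝ → ℝ} {M : ℝ} (hh : Differentiable ℝ h) (h0 : h 0 = 0)
    (hM : ∀ t ∈ Icc (0 : ℝ) 1, |deriv h t| ≤ M) {t : ℝ} (ht : t ∈ Icc (0 : ℝ) 1) :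
    |h t| ≤ M * t := by
  simpa [h0] using norm_image_sub_le_of_norm_deriv_le_segment'
    (fun x _ => (hh x).hasDerivAt.hasDerivWithinAt) (fun x hx => hM x (Ico_subset_Icc_self hx)) t ht

lemma neg_sq_mul_le_integral_deriv_sq_sub_sq {h : ℝ → ℝ} (hh : ContDiff ℝ 1 h) (h0 : h 0 = 0)
    {M ε : ℝ} (hM : ∀ t ∈ Icc (0 : ℝ) 1, |deriv h t| ≤ M) (hε : ε ∈ Ioc (0 : ℝ) 1) :
    -(M ^ 2 * ε) ≤ ∫ t in ε..1, (deriv h t ^ 2 - (π / 2) ^ 2 * h t ^ 2) := by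
  obtain ⟨hε0, hε1⟩ := hε
  have hd : Differentiable ℝ h := hh.differentiable one_ne_zero
  have hsin : ∀ s ∈ Icc ε 1, sin (π / 2 * s) ≠ 0 := fun s hs =>
    (sin_pos_of_pos_of_lt_pi (by nlinarith [pi_pos, hs.1]) (by nlinarith [pi_pos, hs.2])).ne'
  have picone := sub_le_integral_deriv_sq_sub_sq_of_riccati hε1
    (fun s _ => (hd s).hasDerivAt) (hh.continuous_deriv le_rfl).continuousOn
    (fun s hs => hasDerivAt_const_mul_cot_const_mul (hsin s hs))
  have hx0 : 0 < π / 2 * ε := by positivity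
  have hx1 : π / 2 * ε ≤ π / 2 := by nlinarith [pi_pos]
  have hcot := mul_cot_le_one hx0 hx1
  have hcot0 := cot_nonneg_of_nonneg_of_le_pi_div_two hx0.le hx1
  have hhε : h ε ^ 2 ≤ (M * ε) ^ 2 := by
    rw [← sq_abs]
    have := abs_le_mul_of_abs_deriv_le hd h0 hM ⟨hε0.le, hε1⟩
    gcongr
  have hcot1 : cot (π / 2) = 0 := by rw [cot_eq_cos_div_sin, cos_pi_div_two, zero_div]
  rw [mul_one, hcot1, mul_zero, zero_mul, zero_sub] at picone
  nlinarith [mul_le_mul_of_nonneg_left hhε (by positivity : 0 ≤ π / 2 * cot (π / 2 * ε)),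
    mul_le_mul_of_nonneg_right hcot (by positivity : 0 ≤ M ^ 2 * ε)]

theorem sq_pi_div_two_mul_integral_sq_le_integral_deriv_sq {h : ℝ → ℝ} (hh : ContDiff ℝ 1 h)
    (h0 : h 0 = 0) :
    (π / 2) ^ 2 * ∫ t in (0 : ℝ)..1, h t ^ 2 ≤ ∫ t in (0 : ℝ)..1, deriv h t ^ 2 := by
  have hd_cont : Continuous (deriv h) := hh.continuous_deriv le_rfl
  set f : ℝ → ℝ := fun t => deriv h t ^ 2 - (π / 2) ^ 2 * h t ^ 2
  have hf_cont : Continuous f := by fun_prop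
  suffices 0 ≤ ∫ t in (0 : ℝ)..1, f t by
    rwa [intervalIntegral.integral_sub, integral_const_mul, sub_nonneg] at this <;>
      exact Continuous.intervalIntegrable (by fun_prop) _ _
  obtain ⟨M, hM⟩ := (isCompact_Icc (a := (0 : ℝ)) (b := 1)).exists_bound_of_continuousOn
    hd_cont.continuousOn
  have hcont : ContinuousWithinAt (fun x => ∫ t in x..1, f t) (Ioi 0) 0 := by
    refine ContinuousWithinAt.mono_of_mem_nhdsWithin (t := Icc 0 1) ?_ ?_
    · rw [← uIcc_of_le zero_le_one]
      exact continuousOn_primitive_interval_left hf_cont.integrableOn_uIcc 0 left_mem_uIcc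
    · exact mem_of_superset (Ioc_mem_nhdsGT zero_lt_one) Ioc_subset_Icc_self
  have lim : Tendsto (fun x => (∫ t in x..1, f t) + M ^ 2 * x) (𝓝[>] 0)
      (𝓝 (∫ t in (0 : ℝ)..1, f t)) := by
    simpa using (hcont.fun_add (continuous_const_mul (M ^ 2)).continuousWithinAt).tendsto
  refine ge_of_tendsto lim ?_
  filter_upwards [Ioc_mem_nhdsGT zero_lt_one] with ε hε
  linarith [neg_sq_mul_le_integral_deriv_sq_sub_sq hh h0 hM hε]

theorem deviation_integral_lower_bound_general (a : ℝ) (ha : 0 ≤ a)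
    (h : ℝ → ℝ) (hh : ContDiff ℝ 1 h) (hh0 : h 0 = 0) :
    ∫ t in (0:ℝ)..1, ((deriv h t) ^ 2 - a * h t + a * Real.sin (h t))
      ≥ ((π / 2) ^ 2 - a / π) * ∫ t in (0:ℝ)..1, (h t) ^ 2 := by
  have hd_cont : Continuous (deriv h) := hh.continuous_deriv le_rfl
  have pointwise : ∫ t in (0 : ℝ)..1, (deriv h t ^ 2 - a / π * h t ^ 2)
      ≤ ∫ t in (0 : ℝ)..1, (deriv h t ^ 2 - a * h t + a * sin (h t)) := by
    refine integral_mono zero_le_one (Continuous.intervalIntegrable (by fun_prop) _ _)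
      (Continuous.intervalIntegrable (by fun_prop) _ _) fun t => ?_
    calc deriv h t ^ 2 - a / π * h t ^ 2
        = deriv h t ^ 2 - a * h t + a * (h t - h t ^ 2 / π) := by ring
      _ ≤ deriv h t ^ 2 - a * h t + a * sin (h t) := by gcongr; exact sub_sq_div_pi_le_sin _
  rw [integral_sub (Continuous.intervalIntegrable (by fun_prop) _ _)
    (Continuous.intervalIntegrable (by fun_prop) _ _), integral_const_mul] at pointwise
  linarith [sq_pi_div_two_mul_integral_sq_le_integral_deriv_sq hh hh0]

theorem deviation_integral_lower_bound (a : ℝ) (ha : 0 ≤ a)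
    (h : ℝ → ℝ) (hh : ContDiff ℝ 1 h) (hh0 : h 0 = 0) (hh1 : deriv h 1 = 0) :
    ∫ t in (0:ℝ)..1, ((deriv h t) ^ 2 - a * h t + a * Real.sin (h t))
      ≥ ((π / 2) ^ 2 - a / π) * ∫ t in (0:ℝ)..1, (h t) ^ 2 :=
  deviation_integral_lower_bound_general a ha h hh hh0
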